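/- arXiv:2306.04005 — 7 statements merged into one kernel-verified Lean document; each statement's English description precedes it below -/
import Mathlib

section
/- For a tree T on n vertices with distance matrix D and degree vector d, the row vector d^T D equals 2·1^T D − (n−1)·1^T, i.e., for every vertex k, Σ_j d_j d(j,k) = 2 Σ_j d(j,k) − (n−1). -/
/-!
Root the tree at `k`. Every edge joins a vertex to a neighbour one step closer to `k`, and every
vertex `j ≠ k` has exactly one such closer neighbour. So each vertex `j ≠ k` owns exactly one
edge, to which it contributes `d(j,k)` and its closer end contributes `d(j,k) - 1`; summing over
edges gives `∑ⱼ deg j · d(j,k) = ∑_{j ≠ k} (2 d(j,k) - 1)`.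
-/

open Finset

namespace SimpleGraph

variable {V : Type*} {G : SimpleGraph V}

lemma Reachable.exists_adj_dist_add_one_eq {j k : V} (h : G.Reachable j k) (hjk : j ≠ k) :
    ∃ i, G.Adj j i ∧ G.dist i k + 1 = G.dist j k := by
  obtain ⟨p, hp⟩ := h.exists_walk_length_eq_dist
  cases p with
  | nil => exact absurd rfl hjk
  | cons hadj q =>
    refine ⟨_, hadj, le_antisymm ?_ ?_⟩
    · have := dist_le q
      rw [Walk.length_cons] at hp
      omega
    · have := hadj.reachable.dist_triangle_left k
      rwa [dist_eq_one_iff_adj.mpr hadj, add_comm] at this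

lemma IsAcyclic.eq_of_adj_of_dist_add_one_eq (hG : G.IsAcyclic) {i i' j k : V}
    (hi : G.Adj j i) (hi' : G.Adj j i') (hd : G.dist i k + 1 = G.dist j k)
    (hd' : G.dist i' k + 1 = G.dist j k) : i = i' := by
  have geodesic_through : ∀ {i}, G.Adj j i → G.dist i k + 1 = G.dist j k →
      ∃ p : G.Path j k, p.1.getVert 1 = i := by
    intro i hi hd
    have hjk : G.Reachable j k := .of_dist_ne_zero (by omega)
    obtain ⟨q, hq⟩ := (hi.symm.reachable.trans hjk).exists_walk_length_eq_dist
    exact ⟨⟨.cons hi q, Walk.isPath_of_length_eq_dist _ (by simp [hq, hd])⟩, by simp⟩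
  obtain ⟨p, rfl⟩ := geodesic_through hi hd
  obtain ⟨p', rfl⟩ := geodesic_through hi' hd'
  rw [(hG.subsingleton_path j k).elim p p']

/-- When `i` is the farther end of the edge, `d(j,k)` is written as `d(i,k) - 1`, so that after
swapping the double sum it is charged to `i`, the vertex owning the edge. -/
lemma IsTree.dist_eq_ite_add_ite (hG : G.IsTree) (k : V) {i j : V} (hadj : G.Adj j i) :
    (G.dist j k : ℤ) = (if G.dist i k + 1 = G.dist j k then (G.dist j k : ℤ) else 0)
      + (if G.dist j k + 1 = G.dist i k then (G.dist i k : ℤ) - 1 else 0) := by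
  have := hG.dist_eq_dist_add_one_of_adj k hadj
  rw [dist_comm (u := k), dist_comm (u := k)] at this
  split_ifs <;> omega

section Finite

variable [Fintype V] [DecidableRel G.Adj] {M : Type*} [AddCommMonoid M]

lemma sum_neighborFinset_comm (F : V → V → M) :
    ∑ j, ∑ i ∈ G.neighborFinset j, F j i = ∑ j, ∑ i ∈ G.neighborFinset j, F i j :=
  sum_comm' (by simp [adj_comm])

lemma IsTree.sum_neighborFinset_ite_dist_add_one_eq [DecidableEq V] (hG : G.IsTree) (j k : V)
    (c : M) :
    ∑ i ∈ G.neighborFinset j, (if G.dist i k + 1 = G.dist j k then c else 0)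
      = if j = k then 0 else c := by
  rw [sum_ite, sum_const_zero, add_zero, sum_const]
  split_ifs with hjk
  · subst hjk
    simp
  · obtain ⟨i, hi, hd⟩ := (hG.connected j k).exists_adj_dist_add_one_eq hjk
    suffices {i' ∈ G.neighborFinset j | G.dist i' k + 1 = G.dist j k} = {i} by
      rw [this, card_singleton, one_smul]
    ext i'
    simp only [mem_filter, mem_neighborFinset, mem_singleton]
    refine ⟨fun ⟨hi', hd'⟩ => hG.isAcyclic.eq_of_adj_of_dist_add_one_eq hi' hi hd' hd, ?_⟩
    rintro rfl
    exact ⟨hi, hd⟩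

theorem IsTree.sum_degree_mul_dist [DecidableEq V] (hG : G.IsTree) (k : V) :
    ∑ j, (G.degree j : ℤ) * G.dist j k = ∑ j ∈ univ.erase k, (2 * (G.dist j k : ℤ) - 1) := by
  calc ∑ j, (G.degree j : ℤ) * G.dist j k
      = ∑ j, ∑ i ∈ G.neighborFinset j, (G.dist j k : ℤ) := by
        simp [card_neighborFinset_eq_degree]
    _ = ∑ j, ∑ i ∈ G.neighborFinset j,
          ((if G.dist i k + 1 = G.dist j k then (G.dist j k : ℤ) else 0)
            + (if G.dist j k + 1 = G.dist i k then (G.dist i k : ℤ) - 1 else 0)) :=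
        sum_congr rfl fun j _ => sum_congr rfl fun i hi =>
          hG.dist_eq_ite_add_ite k (mem_neighborFinset G j i |>.mp hi)
    _ = ∑ j, ∑ i ∈ G.neighborFinset j,
          ((if G.dist i k + 1 = G.dist j k then (G.dist j k : ℤ) else 0)
            + (if G.dist i k + 1 = G.dist j k then (G.dist j k : ℤ) - 1 else 0)) := by
        simp only [sum_add_distrib]
        rw [sum_neighborFinset_comm (fun j i =>
          if G.dist j k + 1 = G.dist i k then (G.dist i k : ℤ) - 1 else 0)]
    _ = ∑ j ∈ univ.erase k, (2 * (G.dist j k : ℤ) - 1) := by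
        simp only [ite_add_ite, add_zero, hG.sum_neighborFinset_ite_dist_add_one_eq]
        rw [sum_ite, sum_const_zero, zero_add, filter_ne']
        exact sum_congr rfl fun j _ => by ring

end Finite

end SimpleGraph

theorem tree_degree_distance_row (n : ℕ) {V : Type*} [Fintype V]
    (G : SimpleGraph V) [DecidableRel G.Adj] (hT : G.IsTree)
    (hn : Fintype.card V = n) :
    ∀ k : V, (∑ j : V, (G.degree j : ℤ) * (G.dist j k : ℤ))
      = 2 * (∑ j : V, (G.dist j k : ℤ)) - ((n : ℤ) - 1) := by
  intro k
  classical
  rw [hT.sum_degree_mul_dist k, sum_erase_eq_sub (mem_univ k), sum_sub_distrib, ← mul_sum,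
    sum_const, card_univ, hn, SimpleGraph.dist_self]
  simp only [CharP.cast_eq_zero, mul_zero, zero_sub]
  ring
end

section
/- Let T be a tree on n vertices and a, b, r vertices. Then d(r,a) + d(r,b) − d(a,b) = 2(n−1) if and only if T is a path on n vertices, a = b is one end vertex, and r is the other end vertex. -/
/-!
All distances from `r` are below `n`, so `d(r,a) + d(r,b) - d(a,b) ≤ 2(n-1) - d(a,b)`, and equality
forces `a = b` and `d(r,a) = n - 1`. A shortest `r`–`a` path of length `n - 1` visits every vertex,
and since a tree has exactly `n - 1` edges it also uses every edge; a walk that is both Hamiltonian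
and Eulerian exhibits the graph as a path graph. Conversely, the position along a path graph
changes by at most one across an edge, so its two ends are at distance `n - 1`.
-/

/-- `G` is a path graph on all of `V` whose two end vertices are `r` and `a`:
there is a linear ordering of the vertices under which consecutive vertices are
exactly the adjacent ones, with `r` first and `a` last. -/
def IsPathWithEnds {V : Type*} [Fintype V] (G : SimpleGraph V) (r a : V) : Prop :=
  ∃ e : Fin (Fintype.card V) ≃ V,
    ((e.symm r : ℕ) = 0) ∧ ((e.symm a : ℕ) = Fintype.card V - 1) ∧
    ∀ i j : Fin (Fintype.card V), G.Adj (e i) (e j) ↔ ((i : ℕ) + 1 = j ∨ (j : ℕ) + 1 = i)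

namespace SimpleGraph

variable {V : Type*} {G : SimpleGraph V}

theorem dist_lt_card [Fintype V] (u v : V) : G.dist u v < Fintype.card V := by
  by_cases h : G.Reachable u v
  · obtain ⟨p, hp, hlen⟩ := h.exists_path_of_dist
    exact hlen ▸ hp.length_lt
  · rw [dist_eq_zero_of_not_reachable h]
    exact Fintype.card_pos_iff.mpr ⟨u⟩

namespace Walk

theorem abs_sub_le_length (F : V → ℤ) (hF : ∀ x y, G.Adj x y → |F x - F y| ≤ 1) {u v : V}
    (p : G.Walk u v) : |F u - F v| ≤ p.length := by
  induction p with
  | nil => simp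
  | @cons u w v h q ih =>
    have := abs_sub_le (F u) (F w) (F v)
    have := hF u w h
    simp only [length_cons]
    push_cast
    omega

theorem IsTrail.isEulerian_of_card_edgeFinset_le [DecidableEq V] [Fintype G.edgeSet] {u v : V}
    {p : G.Walk u v} (hp : p.IsTrail) (hcard : G.edgeFinset.card ≤ p.length) :
    p.IsEulerian := by
  refine hp.isEulerian_of_forall_mem fun e he => ?_
  have hsub : p.edges.toFinset ⊆ G.edgeFinset := fun x hx =>
    mem_edgeFinset.mpr (p.edges_subset_edgeSet (List.mem_toFinset.mp hx))
  have hcard' : G.edgeFinset.card ≤ p.edges.toFinset.card := by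
    rwa [List.toFinset_card_of_nodup hp.edges_nodup, length_edges]
  rw [← List.mem_toFinset, Finset.eq_of_subset_of_card_le hsub hcard']
  exact mem_edgeFinset.mpr he

theorem IsPath.adj_getVert_iff [DecidableEq V] {u v : V} {p : G.Walk u v} (hp : p.IsPath)
    (hE : p.IsEulerian) {i j : ℕ} (hi : i ≤ p.length) (hj : j ≤ p.length) :
    G.Adj (p.getVert i) (p.getVert j) ↔ i + 1 = j ∨ j + 1 = i := by
  constructor
  · intro hadj
    obtain ⟨k, hk, hedge⟩ := (mk_mem_edges_iff_exists p).mp (hE.mem_edges_iff.mpr hadj)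
    have inj {m n : ℕ} (hm : m ≤ p.length) (hn : n ≤ p.length) (h : p.getVert m = p.getVert n) :
        m = n := hp.getVert_injOn hm hn h
    rcases Sym2.eq_iff.mp hedge with ⟨hki, hkj⟩ | ⟨hkj, hki⟩
    · have := inj (by omega) hi hki
      have := inj (by omega) hj hkj
      omega
    · have := inj (by omega) hj hkj
      have := inj (by omega) hi hki
      omega
  · rintro (rfl | rfl)
    · exact p.adj_getVert_succ (by omega)
    · exact (p.adj_getVert_succ (by omega)).symm

theorem IsHamiltonian.isPathWithEnds [Fintype V] [DecidableEq V] {r a : V} {p : G.Walk r a}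
    (hH : p.IsHamiltonian) (hE : p.IsEulerian) : IsPathWithEnds G r a := by
  have hlen := hH.length_eq
  have hpos : 0 < Fintype.card V := Fintype.card_pos_iff.mpr ⟨r⟩
  let e : Fin (Fintype.card V) ≃ V := (finCongr hH.length_support.symm).trans hH.getVertEquiv
  have he : ∀ i, e i = p.getVert i := fun _ => rfl
  refine ⟨e, ?_, ?_, fun i j => ?_⟩
  · rw [show r = e ⟨0, hpos⟩ by simp [he], e.symm_apply_apply]
  · rw [show a = e ⟨Fintype.card V - 1, by omega⟩ by simp [he, ← hlen], e.symm_apply_apply]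
  · rw [he, he]
    exact hH.isPath.adj_getVert_iff hE (by omega : (i : ℕ) ≤ p.length)
      (by omega : (j : ℕ) ≤ p.length)

end Walk

theorem IsTree.isPathWithEnds_of_dist_eq [Fintype V] (hT : G.IsTree) {r a : V}
    (h : G.dist r a = Fintype.card V - 1) : IsPathWithEnds G r a := by
  classical
  obtain ⟨p, hp, hlen⟩ := hT.connected.exists_path_of_dist r a
  have hH : p.IsHamiltonian := Walk.isHamiltonian_iff_isPath_and_length_eq.mpr ⟨hp, hlen.trans h⟩
  refine hH.isPathWithEnds (hp.isTrail.isEulerian_of_card_edgeFinset_le ?_)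
  have := hT.card_edgeFinset
  omega

end SimpleGraph

theorem IsPathWithEnds.card_sub_one_le_dist {V : Type*} [Fintype V] {G : SimpleGraph V}
    {r a : V} (h : IsPathWithEnds G r a) (hr : G.Reachable r a) :
    Fintype.card V - 1 ≤ G.dist r a := by
  obtain ⟨e, hr0, haN, hadj⟩ := h
  obtain ⟨p, hp⟩ := hr.exists_walk_length_eq_dist
  have hF : ∀ x y, G.Adj x y → |((e.symm x : ℕ) : ℤ) - e.symm y| ≤ 1 := by
    intro x y hxy
    rw [← e.apply_symm_apply x, ← e.apply_symm_apply y, hadj] at hxy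
    rw [abs_le]
    omega
  have := p.abs_sub_le_length _ hF
  rw [hr0, haN, hp, abs_le] at this
  omega

theorem dist_sum_eq_max_iff (n : ℕ) {V : Type*} [Fintype V]
    (G : SimpleGraph V) (hT : G.IsTree) (hn : Fintype.card V = n)
    (a b r : V) :
    (G.dist r a : ℤ) + (G.dist r b : ℤ) - (G.dist a b : ℤ) = 2 * ((n : ℤ) - 1) ↔
      (a = b ∧ IsPathWithEnds G r a) := by
  subst hn
  have hra := G.dist_lt_card r a
  have hrb := G.dist_lt_card r b
  constructor
  · intro h
    have hab : G.dist a b = 0 := by omega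
    obtain rfl := hT.connected.dist_eq_zero_iff.mp hab
    exact ⟨rfl, hT.isPathWithEnds_of_dist_eq (by omega)⟩
  · rintro ⟨rfl, hpath⟩
    have := hpath.card_sub_one_le_dist (hT.connected r a)
    rw [SimpleGraph.dist_self]
    omega
end

section
/- Let T be a tree on n vertices with distance matrix D, and let vertex 1 be a fixed vertex. Define R(T) = 2(n−1)·1^T D e_1 − 1^T D 1 (where e_1 is the indicator of vertex 1). Then R(T) = 4 Σ_{1 ≤ a < b ≤ n} d(1, P_{a,b}), where d(1, P_{a,b}) is the distance from vertex 1 to the unique path between a and b. -/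
/-!
In a tree the three geodesics between `v`, `a` and `b` meet in a median vertex `m`, and the
vertex of `P_{a,b}` closest to `v` is `m`. Hence `2 d(v, P_{a,b}) = d(v,a) + d(v,b) - d(a,b)`.
Summing the right-hand side over all ordered pairs gives `2n Σ_a d(a,v) - 1ᵀD1`; the diagonal
contributes `2 Σ_a d(a,v)` and every unordered pair `a < b` is counted twice.
-/

/-- The distance from vertex `r` to the (unique, in a tree) path between `a` and `b`. -/
noncomputable def distToPath {V : Type*} (G : SimpleGraph V) (r a b : V) : ℕ :=
  sInf (G.dist r '' {s | G.dist a s + G.dist s b = G.dist a b})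

namespace SimpleGraph

variable {V : Type*} {G : SimpleGraph V}

theorem IsAcyclic.length_eq_dist_of_isPath (hG : G.IsAcyclic) {u v : V} {p : G.Walk u v}
    (hp : p.IsPath) : p.length = G.dist u v := by
  obtain ⟨q, hq, hql⟩ := p.reachable.exists_path_of_dist
  have hpq : p = q := congrArg Subtype.val ((hG.subsingleton_path u v).elim ⟨p, hp⟩ ⟨q, hq⟩)
  rw [← hql, hpq]

namespace Walk

theorem IsPath.append {u v w : V} {p : G.Walk u v} {q : G.Walk v w} (hp : p.IsPath)
    (hq : q.IsPath) (h : ∀ x ∈ p.support, x ∈ q.support → x = v) : (p.append q).IsPath := by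
  rw [isPath_def, support_append]
  refine hp.support_nodup.append hq.support_nodup.tail fun x hx hx' => ?_
  obtain rfl := h x hx (List.mem_of_mem_tail hx')
  have hnd := hq.support_nodup
  rw [← q.cons_tail_support] at hnd
  exact (List.nodup_cons.mp hnd).1 hx'

theorem exists_append_eq_of_first_mem {u v : V} (q : G.Walk u v) (P : V → Prop) (hv : P v) :
    ∃ (m : V) (q₁ : G.Walk u m) (q₂ : G.Walk m v),
      q₁.append q₂ = q ∧ P m ∧ ∀ x ∈ q₁.support, P x → x = m := by
  induction q with
  | nil => exact ⟨_, nil, nil, rfl, hv, by simp⟩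
  | @cons u _ _ h q ih =>
    by_cases hu : P u
    · exact ⟨u, nil, cons h q, rfl, hu, by simp⟩
    · obtain ⟨m, q₁, q₂, rfl, hm, hfirst⟩ := ih hv
      refine ⟨m, cons h q₁, q₂, rfl, hm, ?_⟩
      intro x hx hPx
      rcases List.mem_cons.mp hx with rfl | hx
      · exact absurd hPx hu
      · exact hfirst x hx hPx

end Walk

theorem IsTree.exists_median (hG : G.IsTree) (v a b : V) :
    ∃ m : V, G.dist v a = G.dist v m + G.dist m a ∧
      G.dist v b = G.dist v m + G.dist m b ∧
      G.dist a b = G.dist a m + G.dist m b := by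
  classical
  -- `m` is the first vertex of the `v`–`a` path on the `a`–`b` path; all walks below are paths,
  -- hence geodesics.
  have hlen {x y : V} {p : G.Walk x y} (hp : p.IsPath) :=
    hG.isAcyclic.length_eq_dist_of_isPath hp
  obtain ⟨q, hq, -⟩ := hG.connected.exists_path_of_dist v a
  obtain ⟨p, hp, -⟩ := hG.connected.exists_path_of_dist a b
  obtain ⟨m, q₁, q₂, rfl, hm, hfirst⟩ :=
    q.exists_append_eq_of_first_mem (· ∈ p.support) p.start_mem_support
  have hq₁ : q₁.IsPath := hq.of_append_left
  have hvb : (q₁.append (p.dropUntil m hm)).IsPath :=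
    hq₁.append (hp.dropUntil hm) fun x hx hx' =>
      hfirst x hx (p.support_dropUntil_subset_support hm hx')
  refine ⟨m, ?_, ?_, ?_⟩
  · rw [← hlen hq, ← hlen hq₁, ← hlen hq.of_append_right, Walk.length_append]
  · rw [← hlen hvb, ← hlen hq₁, ← hlen (hp.dropUntil hm), Walk.length_append]
  · rw [← hlen hp, ← hlen (hp.takeUntil hm), ← hlen (hp.dropUntil hm), ← Walk.length_append,
      p.take_spec hm]

theorem Connected.dist_add_dist_le_two_mul_dist_add (hG : G.Connected) {v a b s : V}
    (hs : G.dist a s + G.dist s b = G.dist a b) :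
    G.dist v a + G.dist v b ≤ 2 * G.dist v s + G.dist a b := by
  have hva : G.dist v a ≤ G.dist v s + G.dist s a := hG.dist_triangle
  have hvb : G.dist v b ≤ G.dist v s + G.dist s b := hG.dist_triangle
  rw [dist_comm (u := s)] at hva
  omega

theorem IsTree.two_mul_distToPath_add_dist (hG : G.IsTree) (v a b : V) :
    2 * distToPath G v a b + G.dist a b = G.dist v a + G.dist v b := by
  obtain ⟨m, hva, hvb, hab⟩ := hG.exists_median v a b
  have hma : G.dist m a = G.dist a m := dist_comm
  have hm : G.dist a m + G.dist m b = G.dist a b := hab.symm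
  have hdist : distToPath G v a b = G.dist v m :=
    le_antisymm (Nat.sInf_le ⟨m, hm, rfl⟩) <| le_csInf ⟨_, m, hm, rfl⟩ <| by
      rintro _ ⟨s, hs, rfl⟩
      have hle := hG.connected.dist_add_dist_le_two_mul_dist_add (v := v) hs
      omega
  omega

end SimpleGraph

namespace Fintype

open Finset in
theorem sum_sum_eq_two_nsmul_sum_sum_lt_add_sum_diag {ι M : Type*} [Fintype ι] [LinearOrder ι]
    [AddCommMonoid M] (f : ι → ι → M) (hf : ∀ a b, f a b = f b a) :
    ∑ a, ∑ b, f a b = 2 • ∑ a, ∑ b ∈ univ.filter (a < ·), f a b + ∑ a, f a a := by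
  have hsplit (a : ι) : ∑ b, f a b
      = ∑ b ∈ univ.filter (a < ·), f a b + ∑ b ∈ univ.filter (· < a), f a b + f a a := by
    rw [sum_filter, sum_filter, ← sum_ite_eq' a (f a), ← sum_add_distrib,
      ← sum_add_distrib]
    refine Finset.sum_congr rfl fun b _ => ?_
    rcases lt_trichotomy a b with h | rfl | h
    · simp [h, h.not_gt, h.ne']
    · simp
    · simp [h, h.not_gt, h.ne]
  have hswap :
      ∑ a, ∑ b ∈ univ.filter (· < a), f a b = ∑ a, ∑ b ∈ univ.filter (a < ·), f a b := by
    rw [sum_comm' (t' := univ) (s' := fun b => univ.filter (b < ·)) (by simp)]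
    simp_rw [hf]
  rw [Finset.sum_congr rfl fun a _ => hsplit a, sum_add_distrib, sum_add_distrib, hswap,
    two_nsmul]

end Fintype

open Finset SimpleGraph

theorem R_eq_four_sum_dist_to_paths (n : ℕ)
    (G : SimpleGraph (Fin n)) (hT : G.IsTree) (v : Fin n) :
    2 * ((n : ℤ) - 1) * (∑ a : Fin n, (G.dist a v : ℤ))
      - (∑ a : Fin n, ∑ b : Fin n, (G.dist a b : ℤ))
    = 4 * ∑ a : Fin n, ∑ b ∈ Finset.univ.filter (fun b => a < b),
        (distToPath G v a b : ℤ) := by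
  set f : Fin n → Fin n → ℤ := fun a b => G.dist v a + G.dist v b - G.dist a b with hf
  have hf_distToPath (a b : Fin n) : f a b = 2 * distToPath G v a b := by
    have := hT.two_mul_distToPath_add_dist v a b
    zify at this
    linarith
  have hf_symm (a b : Fin n) : f a b = f b a := by
    simp only [hf, dist_comm (u := a)]
    ring
  have hsum :
      ∑ a, ∑ b, f a b = 2 * n * ∑ a, (G.dist a v : ℤ) - ∑ a, ∑ b, (G.dist a b : ℤ) := by
    simp only [hf, sum_sub_distrib, sum_add_distrib, sum_const, card_univ, Fintype.card_fin,
      nsmul_eq_mul, dist_comm (v := v)]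
    rw [← mul_sum]
    ring
  have hdiag : ∑ a, f a a = 2 * ∑ a, (G.dist a v : ℤ) := by
    simp only [hf, SimpleGraph.dist_self, Nat.cast_zero, sub_zero, ← two_mul, mul_sum,
      dist_comm (v := v)]
  have hpairs := Fintype.sum_sum_eq_two_nsmul_sum_sum_lt_add_sum_diag f hf_symm
  rw [hsum, hdiag] at hpairs
  simp only [hf_distToPath, ← mul_sum, two_nsmul] at hpairs
  linarith
end

section
/- Let T be a tree on n vertices with fixed vertex 1 and R(T) = 2(n−1)·Σ_a d(a,1) − Σ_{a,b} d(a,b). Then R(T) = 0 if and only if T is the star K_{1,n−1} with vertex 1 as its centre (i.e., every other vertex is adjacent to vertex 1). -/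
/-!
Summing `d(a,v) + d(v,b) - d(a,b)` over ordered pairs `a ≠ b` gives exactly `R(T)`, and each
term is nonnegative by the triangle inequality. Hence `R(T) = 0` iff `v` lies on a geodesic
between any two distinct vertices. Applied to a vertex `w` and a neighbour of `w`, this forces
`d(v,w) = 1`; conversely, in a star centred at `v` two leaves are at distance `2`, as a tree
has no triangles.
-/

open Finset

namespace SimpleGraph

variable {V : Type*} {G : SimpleGraph V}

theorem IsAcyclic.not_adj_of_adj_of_adj (hG : G.IsAcyclic) {u a b : V} (ha : G.Adj u a)
    (hb : G.Adj u b) (hab : a ≠ b) : ¬G.Adj a b := by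
  intro hadj
  have hpath : (Walk.cons ha.symm (Walk.cons hb Walk.nil)).IsPath := by
    simp [Walk.isPath_def, hab, ha.ne', hb.ne]
  exact hb.ne (hG.eq_snd_of_adj_start hpath hadj (by simp)).symm

theorem IsAcyclic.dist_eq_two_of_adj_of_adj (hG : G.IsAcyclic) {u a b : V} (ha : G.Adj u a)
    (hb : G.Adj u b) (hab : a ≠ b) : G.dist a b = 2 := by
  have hle : G.dist a b ≤ 2 := dist_le (Walk.cons ha.symm (Walk.cons hb Walk.nil))
  have hpos : 0 < G.dist a b :=
    (Walk.cons ha.symm (Walk.cons hb Walk.nil)).reachable.pos_dist_of_ne hab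
  have hne : G.dist a b ≠ 1 :=
    fun h => hG.not_adj_of_adj_of_adj ha hb hab (dist_eq_one_iff_adj.mp h)
  omega

theorem Connected.adj_of_forall_dist_eq_dist_add_dist (hG : G.Connected) {v : V}
    (h : ∀ a b, a ≠ b → G.dist a b = G.dist a v + G.dist v b) {w : V} (hw : w ≠ v) :
    G.Adj v w := by
  have : Nontrivial V := ⟨⟨w, v, hw⟩⟩
  obtain ⟨u, hwu⟩ := hG.preconnected.exists_adj_of_nontrivial w
  have hdist := h u w hwu.ne'
  rw [dist_eq_one_iff_adj.mpr hwu.symm] at hdist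
  have hpos := hG.pos_dist_of_ne hw.symm
  exact dist_eq_one_iff_adj.mp (by omega)

theorem IsAcyclic.dist_eq_dist_add_dist_of_forall_adj (hG : G.IsAcyclic) {v : V}
    (h : ∀ w, w ≠ v → G.Adj v w) {a b : V} (hab : a ≠ b) :
    G.dist a b = G.dist a v + G.dist v b := by
  rcases eq_or_ne a v with rfl | hav
  · simp
  rcases eq_or_ne b v with rfl | hbv
  · simp
  rw [hG.dist_eq_two_of_adj_of_adj (h a hav) (h b hbv) hab, dist_comm,
    dist_eq_one_iff_adj.mpr (h a hav), dist_eq_one_iff_adj.mpr (h b hbv)]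

theorem IsTree.forall_dist_eq_dist_add_dist_iff (hG : G.IsTree) (v : V) :
    (∀ a b, a ≠ b → G.dist a b = G.dist a v + G.dist v b) ↔ ∀ w, w ≠ v → G.Adj v w :=
  ⟨fun h _ hw => hG.connected.adj_of_forall_dist_eq_dist_add_dist h hw,
    fun h _ _ hab => hG.isAcyclic.dist_eq_dist_add_dist_of_forall_adj h hab⟩

variable [Fintype V] [DecidableEq V]

theorem sum_sum_erase_dist_add_dist_sub_dist (G : SimpleGraph V) (v : V) :
    ∑ a, ∑ b ∈ univ.erase a, ((G.dist a v : ℤ) + G.dist v b - G.dist a b) =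
      2 * ((Fintype.card V : ℤ) - 1) * ∑ a, (G.dist a v : ℤ)
        - ∑ a, ∑ b, (G.dist a b : ℤ) := by
  simp_rw [sum_erase_eq_sub (mem_univ _), dist_self, dist_comm (u := v)]
  simp only [sum_sub_distrib, sum_add_distrib, sum_const, card_univ, nsmul_eq_mul, ← mul_sum]
  ring

theorem Connected.sum_sum_erase_dist_add_dist_sub_dist_eq_zero_iff (hG : G.Connected) (v : V) :
    ∑ a, ∑ b ∈ univ.erase a, ((G.dist a v : ℤ) + G.dist v b - G.dist a b) = 0 ↔
      ∀ a b, a ≠ b → G.dist a b = G.dist a v + G.dist v b := by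
  have hnonneg (a b : V) : 0 ≤ (G.dist a v : ℤ) + G.dist v b - G.dist a b := by
    have := hG.dist_triangle (u := a) (v := v) (w := b)
    omega
  rw [sum_eq_zero_iff_of_nonneg fun a _ => sum_nonneg fun b _ => hnonneg a b]
  refine forall_congr' fun a => ?_
  simp only [mem_univ, true_implies, mem_erase, and_true,
    sum_eq_zero_iff_of_nonneg fun b _ => hnonneg a b]
  exact forall_congr' fun b => imp_congr ne_comm (by omega)

end SimpleGraph

theorem R_eq_zero_iff_star (n : ℕ) {V : Type*} [Fintype V]
    (G : SimpleGraph V) (hT : G.IsTree) (hn : Fintype.card V = n) (v : V) :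
    2 * ((n : ℤ) - 1) * (∑ a : V, (G.dist a v : ℤ))
        - (∑ a : V, ∑ b : V, (G.dist a b : ℤ)) = 0 ↔
      ∀ w : V, w ≠ v → G.Adj v w := by
  classical
  subst hn
  rw [← SimpleGraph.sum_sum_erase_dist_add_dist_sub_dist,
    hT.connected.sum_sum_erase_dist_add_dist_sub_dist_eq_zero_iff,
    hT.forall_dist_eq_dist_add_dist_iff]
end

section
/- Let T be a tree on n vertices with fixed vertex 1 and R(T) = 2(n−1)·Σ_a d(a,1) − Σ_{a,b} d(a,b). Then R(T) = (2/3)·n(n−1)(n−2) if and only if T is a path on n vertices with vertex 1 as one of its end vertices. -/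
/-!
Put `D a = d(a, v)`. The triangle inequality gives `|D a - D b| ≤ d(a, b)`, so `R` is at most
`2 (n - 1) ∑ D a - ∑ |D a - D b|`; counting through the levels `c k = #{a | k < D a}`, this equals
`4 ∑ₖ C(c k, 2)`. As `D` takes every value between `0` and its maximum, `c k ≤ n - 1 - k`, and
`4 ∑ₖ C(n - 1 - k, 2) = 4 C(n, 3) = (2/3) n (n - 1) (n - 2)`. Equality therefore forces
`d(a, b) = |D a - D b|` for all `a, b`. Then `D` is injective, so `c k = n - 1 - k` and equality
does hold; and `D` is a bijection onto `{0, …, n - 1}` along which adjacency means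
`|D a - D b| = 1`, i.e. `G` is a path starting at `v`.
-/

/-- `G` is a path graph on all of `V` having `v` as one of its two end vertices. -/
def IsPathWithEnd {V : Type*} [Fintype V] (G : SimpleGraph V) (v : V) : Prop :=
  ∃ e : Fin (Fintype.card V) ≃ V,
    ((e.symm v : ℕ) = 0 ∨ (e.symm v : ℕ) = Fintype.card V - 1) ∧
    ∀ i j : Fin (Fintype.card V), G.Adj (e i) (e j) ↔ ((i : ℕ) + 1 = j ∨ (j : ℕ) + 1 = i)

open Finset

section Levels

variable {ι : Type*} [Fintype ι] (f : ι → ℕ)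

theorem sum_eq_sum_range_card_lt {N : ℕ} (hf : ∀ a, f a ≤ N) :
    ∑ a, f a = ∑ k ∈ range N, #{a | k < f a} := by
  have hcount : ∀ a, f a = ∑ k ∈ range N, if k < f a then 1 else 0 := fun a => by
    rw [← card_filter, show {k ∈ range N | k < f a} = range (f a) by
      ext k; simp only [mem_filter, mem_range]; have := hf a; omega, card_range]
  rw [sum_congr rfl fun a _ => hcount a, sum_comm]
  simp only [card_filter]

theorem sum_sum_min_eq_sum_range_card_lt_sq {N : ℕ} (hf : ∀ a, f a ≤ N) :
    ∑ a, ∑ b, min (f a) (f b) = ∑ k ∈ range N, #{a | k < f a} ^ 2 := by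
  rw [← Fintype.sum_prod_type' fun a b => min (f a) (f b),
    sum_eq_sum_range_card_lt (fun p : ι × ι => min (f p.1) (f p.2))
      fun p => (min_le_left _ _).trans (hf p.1)]
  refine sum_congr rfl fun k _ => ?_
  simp only [lt_min_iff]
  rw [sq, ← card_product, ← filter_product, univ_product_univ]

theorem two_mul_card_sub_one_mul_sum_sub_sum_sum_abs_sub {N : ℕ} (hf : ∀ a, f a ≤ N) :
    2 * ((Fintype.card ι : ℚ) - 1) * ∑ a, (f a : ℚ) - ∑ a, ∑ b, |(f a : ℚ) - f b|
      = 4 * ∑ k ∈ range N, ((#{a | k < f a}).choose 2 : ℚ) := by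
  have habs : ∀ x y : ℕ, |(x : ℚ) - y| = x + y - 2 * (min x y : ℕ) := by
    intro x y
    push_cast
    linarith [max_sub_min_eq_abs' (x : ℚ) y, min_add_max (x : ℚ) y]
  have hsum : ∑ a, (f a : ℚ) = ∑ k ∈ range N, (#{a | k < f a} : ℚ) := by
    exact_mod_cast sum_eq_sum_range_card_lt f hf
  have hmin : ∑ a, ∑ b, ((min (f a) (f b) : ℕ) : ℚ) = ∑ k ∈ range N, (#{a | k < f a} : ℚ) ^ 2 := by
    exact_mod_cast sum_sum_min_eq_sum_range_card_lt_sq f hf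
  simp only [habs, sum_sub_distrib, sum_add_distrib, ← mul_sum, sum_const, card_univ,
    nsmul_eq_mul, hmin, hsum, Nat.cast_choose_two]
  simp only [mul_sum, ← sum_sub_distrib, ← sum_add_distrib]
  exact sum_congr rfl fun k _ => by ring

variable {f}

theorem add_one_le_card_filter_le (hf : IsLowerSet (Set.range f)) {a : ι} {k : ℕ}
    (hk : k ≤ f a) : k + 1 ≤ #{b | f b ≤ k} := by
  rw [← card_range (k + 1)]
  refine card_le_card_of_surjOn f fun j hj => ?_
  have hjk : j ≤ k := Nat.lt_succ_iff.1 (mem_range.1 hj)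
  obtain ⟨b, rfl⟩ := hf (hjk.trans hk) (Set.mem_range_self a)
  exact ⟨b, by simpa using hjk, rfl⟩

theorem lt_card_of_isLowerSet_range (hf : IsLowerSet (Set.range f)) (a : ι) :
    f a < Fintype.card ι :=
  (add_one_le_card_filter_le hf le_rfl).trans (card_le_univ _)

theorem card_lt_le_of_isLowerSet_range (hf : IsLowerSet (Set.range f)) (k : ℕ) :
    #{a | k < f a} ≤ Fintype.card ι - 1 - k := by
  have hsplit := card_filter_add_card_filter_not (s := univ) fun a => k < f a
  simp only [not_lt, card_univ] at hsplit
  by_cases h : ∃ a, k < f a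
  · obtain ⟨a, ha⟩ := h
    have := add_one_le_card_filter_le hf ha.le
    omega
  · push Not at h
    simp [filter_false_of_mem fun a _ => (h a).not_gt]

theorem card_lt_eq_of_injective (hf : IsLowerSet (Set.range f)) (hinj : Function.Injective f)
    (k : ℕ) : #{a | k < f a} = Fintype.card ι - 1 - k := by
  refine (card_lt_le_of_isLowerSet_range hf k).antisymm ?_
  have hsplit := card_filter_add_card_filter_not (s := univ) fun a => k < f a
  simp only [not_lt, card_univ] at hsplit
  have : #{a | f a ≤ k} ≤ k + 1 := by
    simpa using card_le_card_of_injOn f (t := range (k + 1))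
      (fun a ha => by simpa [Nat.lt_succ_iff] using ha) hinj.injOn
  omega

theorem sum_range_choose_two (n : ℕ) :
    ∑ j ∈ range n, (j.choose 2 : ℚ) = n * (n - 1) * (n - 2) / 6 := by
  induction n with
  | zero => simp
  | succ n ih =>
    rw [sum_range_succ, ih, Nat.cast_choose_two]
    push_cast
    ring

theorem sum_range_card_lt_choose_two_le (hf : IsLowerSet (Set.range f)) :
    ∑ k ∈ range (Fintype.card ι), ((#{a | k < f a}).choose 2 : ℚ)
      ≤ Fintype.card ι * (Fintype.card ι - 1) * (Fintype.card ι - 2) / 6 := by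
  rw [← sum_range_choose_two, ← sum_range_reflect (fun j => (j.choose 2 : ℚ))]
  gcongr with k
  exact card_lt_le_of_isLowerSet_range hf k

theorem sum_range_card_lt_choose_two_of_injective (hf : IsLowerSet (Set.range f))
    (hinj : Function.Injective f) :
    ∑ k ∈ range (Fintype.card ι), ((#{a | k < f a}).choose 2 : ℚ)
      = Fintype.card ι * (Fintype.card ι - 1) * (Fintype.card ι - 2) / 6 := by
  rw [← sum_range_choose_two, ← sum_range_reflect (fun j => (j.choose 2 : ℚ))]
  simp only [card_lt_eq_of_injective hf hinj]

theorem exists_equiv_fin_of_injective (hinj : Function.Injective f)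
    (hlt : ∀ a, f a < Fintype.card ι) : ∃ e : ι ≃ Fin (Fintype.card ι), ∀ a, (e a : ℕ) = f a :=
  ⟨Equiv.ofBijective (fun a => ⟨f a, hlt a⟩) ((Fintype.bijective_iff_injective_and_card _).2
    ⟨fun _ _ h => hinj (congrArg Fin.val h), (Fintype.card_fin _).symm⟩), fun _ => rfl⟩

end Levels

theorem IsPathWithEnd.exists_equiv_symm_eq_zero {V : Type*} [Fintype V] {G : SimpleGraph V}
    {v : V} (h : IsPathWithEnd G v) : ∃ e : Fin (Fintype.card V) ≃ V, (e.symm v : ℕ) = 0 ∧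
      ∀ i j, G.Adj (e i) (e j) ↔ (i : ℕ) + 1 = j ∨ (j : ℕ) + 1 = i := by
  obtain ⟨e, hv | hv, he⟩ := h
  · exact ⟨e, hv, he⟩
  · refine ⟨Fin.revPerm.trans e, ?_, fun i j => ?_⟩
    · have := (e.symm v).isLt
      simp only [Equiv.symm_trans_apply, Fin.revPerm_symm, Fin.revPerm_apply, Fin.val_rev]
      omega
    · simp only [Equiv.trans_apply, Fin.revPerm_apply, he, Fin.val_rev]
      omega

namespace SimpleGraph

variable {V : Type*} {G : SimpleGraph V}

theorem Connected.exists_dist_eq_of_dist_eq_succ (hG : G.Connected) {a v : V} {k : ℕ}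
    (h : G.dist a v = k + 1) : ∃ b, G.dist b v = k := by
  obtain ⟨p, hp⟩ := hG.exists_walk_length_eq_dist a v
  cases p with
  | nil => simp at h
  | @cons _ b _ hab q =>
    refine ⟨b, le_antisymm ?_ ?_⟩
    · have := dist_le q
      simp only [Walk.length_cons] at hp
      omega
    · have := hG.dist_triangle (u := a) (v := b) (w := v)
      rw [dist_eq_one_iff_adj.2 hab] at this
      omega

theorem Connected.isLowerSet_range_dist (hG : G.Connected) (v : V) :
    IsLowerSet (Set.range (G.dist · v)) := by
  rintro _ k hk ⟨a, rfl⟩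
  induction hk using Nat.decreasingInduction with
  | self => exact ⟨a, rfl⟩
  | of_succ k _ ih =>
    obtain ⟨b, hb⟩ := ih
    exact hG.exists_dist_eq_of_dist_eq_succ hb

theorem Connected.abs_dist_sub_dist_le (hG : G.Connected) (a b v : V) :
    |(G.dist a v : ℤ) - G.dist b v| ≤ G.dist a b := by
  have hab := hG.dist_triangle (u := a) (v := b) (w := v)
  have hba := hG.dist_triangle (u := b) (v := a) (w := v)
  rw [dist_comm (u := b) (v := a)] at hba
  exact abs_sub_le_iff.2 ⟨by omega, by omega⟩

theorem Walk.abs_sub_le_length_s11 {φ : V → ℤ} (hφ : ∀ x y, G.Adj x y → |φ x - φ y| ≤ 1)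
    {a b : V} (p : G.Walk a b) : |φ a - φ b| ≤ p.length := by
  induction p with
  | nil => simp
  | @cons x y z hxy q ih =>
    calc |φ x - φ z| ≤ |φ x - φ y| + |φ y - φ z| := abs_sub_le _ _ _
      _ ≤ 1 + q.length := add_le_add (hφ x y hxy) ih
      _ = (cons hxy q).length := by rw [length_cons]; push_cast; ring

theorem Connected.dist_eq_abs_sub_of_adj_iff (hG : G.Connected) {n : ℕ} (e : Fin n ≃ V)
    (he : ∀ i j, G.Adj (e i) (e j) ↔ (i : ℕ) + 1 = j ∨ (j : ℕ) + 1 = i) (i j : Fin n) :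
    (G.dist (e i) (e j) : ℤ) = |(i : ℤ) - j| := by
  refine le_antisymm ?_ ?_
  · wlog hij : i ≤ j generalizing i j
    · rw [dist_comm, abs_sub_comm]
      exact this j i (le_of_not_ge hij)
    suffices ∀ d, ∀ i j : Fin n, (i : ℕ) + d = j → G.dist (e i) (e j) ≤ d by
      rw [abs_sub_comm, abs_of_nonneg (by simpa using hij)]
      have := this (j - i) i j (by omega)
      omega
    intro d
    induction d with
    | zero => intro i j h; simp [Fin.ext (by simpa using h)]
    | succ d ih =>
      intro i j h
      let i' : Fin n := ⟨i + 1, by omega⟩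
      have := hG.dist_triangle (u := e i) (v := e i') (w := e j)
      rw [dist_eq_one_iff_adj.2 ((he i i').2 (Or.inl rfl))] at this
      have := ih i' j (by simp [i']; omega)
      omega
  · obtain ⟨p, hp⟩ := hG.exists_walk_length_eq_dist (e i) (e j)
    have hφ : ∀ x y, G.Adj x y → |((e.symm x : ℕ) : ℤ) - (e.symm y : ℕ)| ≤ 1 := by
      intro x y hxy
      rw [← e.apply_symm_apply x, ← e.apply_symm_apply y, he] at hxy
      exact abs_sub_le_iff.2 ⟨by omega, by omega⟩
    simpa [hp] using p.abs_sub_le_length_s11 hφ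

theorem Connected.injective_dist_of_forall_dist_eq_abs (hG : G.Connected) {v : V}
    (h : ∀ a b, (G.dist a b : ℤ) = |(G.dist a v : ℤ) - G.dist b v|) :
    Function.Injective (G.dist · v) := fun a b hab =>
  hG.dist_eq_zero_iff.1 (by simpa [show G.dist a v = G.dist b v from hab] using h a b)

variable [Fintype V]

theorem Connected.dist_eq_abs_of_isPathWithEnd (hG : G.Connected) {v : V}
    (h : IsPathWithEnd G v) (a b : V) :
    (G.dist a b : ℤ) = |(G.dist a v : ℤ) - G.dist b v| := by
  obtain ⟨e, hv, he⟩ := h.exists_equiv_symm_eq_zero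
  have hdist : ∀ x y, (G.dist x y : ℤ) = |((e.symm x : ℕ) : ℤ) - (e.symm y : ℕ)| := fun x y => by
    simpa using hG.dist_eq_abs_sub_of_adj_iff e he (e.symm x) (e.symm y)
  simp [hdist, hv]

theorem Connected.isPathWithEnd_of_forall_dist_eq_abs (hG : G.Connected) {v : V}
    (h : ∀ a b, (G.dist a b : ℤ) = |(G.dist a v : ℤ) - G.dist b v|) : IsPathWithEnd G v := by
  obtain ⟨e, he⟩ := exists_equiv_fin_of_injective (hG.injective_dist_of_forall_dist_eq_abs h)
    (lt_card_of_isLowerSet_range (hG.isLowerSet_range_dist v))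
  refine ⟨e.symm, Or.inl (by simp [he]), fun i j => ?_⟩
  rw [← dist_eq_one_iff_adj, ← Nat.cast_inj (R := ℤ), h, ← he, ← he, Equiv.apply_symm_apply,
    Equiv.apply_symm_apply, Nat.cast_one, abs_eq zero_le_one]
  omega

theorem Connected.R_eq_max_iff_forall_dist_eq_abs (hG : G.Connected) (v : V) :
    2 * ((Fintype.card V : ℚ) - 1) * (∑ a : V, (G.dist a v : ℚ))
        - (∑ a : V, ∑ b : V, (G.dist a b : ℚ))
      = (2 / 3) * (Fintype.card V : ℚ) * ((Fintype.card V : ℚ) - 1) * ((Fintype.card V : ℚ) - 2) ↔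
    ∀ a b, (G.dist a b : ℤ) = |(G.dist a v : ℤ) - G.dist b v| := by
  have hD := hG.isLowerSet_range_dist v
  have hprofile := two_mul_card_sub_one_mul_sum_sub_sum_sum_abs_sub (G.dist · v)
    fun a => (lt_card_of_isLowerSet_range hD a).le
  have hle : ∀ a b, |(G.dist a v : ℚ) - G.dist b v| ≤ G.dist a b := fun a b => by
    exact_mod_cast hG.abs_dist_sub_dist_le a b v
  have hsum_iff : ∑ a, ∑ b, |(G.dist a v : ℚ) - G.dist b v| = ∑ a, ∑ b, (G.dist a b : ℚ) ↔
      ∀ a b, (G.dist a b : ℤ) = |(G.dist a v : ℤ) - G.dist b v| := by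
    simp only [← Fintype.sum_prod_type']
    rw [sum_eq_sum_iff_of_le fun p _ => hle p.1 p.2]
    simp only [mem_univ, true_imp_iff, Prod.forall]
    exact forall₂_congr fun a b => by rw [eq_comm]; exact_mod_cast Iff.rfl
  rw [← hsum_iff]
  constructor
  · intro h
    refine le_antisymm (sum_le_sum fun a _ => sum_le_sum fun b _ => hle a b) ?_
    have := sum_range_card_lt_choose_two_le hD
    linarith
  · intro h
    have := sum_range_card_lt_choose_two_of_injective hD
      (hG.injective_dist_of_forall_dist_eq_abs (hsum_iff.1 h))
    linarith

end SimpleGraph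

theorem R_eq_max_iff_path (n : ℕ) {V : Type*} [Fintype V]
    (G : SimpleGraph V) (hT : G.IsTree) (hn : Fintype.card V = n) (v : V) :
    2 * ((n : ℚ) - 1) * (∑ a : V, (G.dist a v : ℚ))
        - (∑ a : V, ∑ b : V, (G.dist a b : ℚ))
      = (2 / 3) * (n : ℚ) * ((n : ℚ) - 1) * ((n : ℚ) - 2) ↔
    IsPathWithEnd G v := by
  subst hn
  have hG := hT.connected
  rw [hG.R_eq_max_iff_forall_dist_eq_abs v]
  exact ⟨hG.isPathWithEnd_of_forall_dist_eq_abs, hG.dist_eq_abs_of_isPathWithEnd⟩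
end

section
/- For n ≥ 3, the polynomial g_e(c) = 3c⁴ + (4n²−4n−6)c³ + (−3n³+3n−1)c² + 3n³ − 3n² satisfies g_e(3n/4 + 21/64) > 0 and g_e(3n/4 + 21/64 − 7/(4n)) < 0; hence g_e has a root in the interval (3n/4 + 21/64 − 7/(4n), 3n/4 + 21/64). -/
/-!
Substituting `n = 3 + m`, the value of `g_e` at the right endpoint is a cubic in `m` with positive
coefficients, and `n⁴` times its value at the left endpoint is a septic in `m` with negative
coefficients; the root then comes from the intermediate value theorem.
-/

/-- The quartic `g_e(c) = 3c⁴ + (4n²−4n−6)c³ + (−3n³+3n−1)c² + 3n³ − 3n²`. -/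
def gE (n c : ℝ) : ℝ :=
  3 * c ^ 4 + (4 * n ^ 2 - 4 * n - 6) * c ^ 3 + (-3 * n ^ 3 + 3 * n - 1) * c ^ 2
    + 3 * n ^ 3 - 3 * n ^ 2

theorem continuous_gE (n : ℝ) : Continuous (gE n) := by
  unfold gE
  fun_prop

theorem gE_right_endpoint (n : ℝ) :
    gE n (3 * n / 4 + 21 / 64) =
      4605 / 2048 * (n - 3) ^ 3 + 989007 / 65536 * (n - 3) ^ 2
        + 7442217 / 262144 * (n - 3) + 164006739 / 16777216 := by
  unfold gE
  ring

theorem gE_left_endpoint_mul_pow_four {n : ℝ} (hn : n ≠ 0) :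
    gE n (3 * n / 4 + 21 / 64 - 7 / (4 * n)) * n ^ 4 =
      -(3459 / 2048 * (n - 3) ^ 7 + 2919729 / 65536 * (n - 3) ^ 6
        + 120453447 / 262144 * (n - 3) ^ 5 + 41052849069 / 16777216 * (n - 3) ^ 4
        + 30673823671 / 4194304 * (n - 3) ^ 3 + 102995483487 / 8388608 * (n - 3) ^ 2
        + 44931374175 / 4194304 * (n - 3) + 62649528189 / 16777216) := by
  unfold gE
  field_simp
  ring

theorem gE_right_endpoint_pos {n : ℝ} (hn : 3 ≤ n) : 0 < gE n (3 * n / 4 + 21 / 64) := by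
  have hm : 0 ≤ n - 3 := by linarith
  rw [gE_right_endpoint]
  positivity

theorem gE_left_endpoint_neg {n : ℝ} (hn : 3 ≤ n) :
    gE n (3 * n / 4 + 21 / 64 - 7 / (4 * n)) < 0 := by
  have hm : 0 ≤ n - 3 := by linarith
  have hn4 : 0 < n ^ 4 := by positivity
  have hprod : gE n (3 * n / 4 + 21 / 64 - 7 / (4 * n)) * n ^ 4 < 0 := by
    rw [gE_left_endpoint_mul_pow_four (by positivity)]
    exact neg_neg_of_pos (by positivity)
  exact neg_of_mul_neg_left hprod hn4.le

theorem gE_root_localization (n : ℝ) (hn : 3 ≤ n) :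
    gE n (3 * n / 4 + 21 / 64) > 0 ∧
    gE n (3 * n / 4 + 21 / 64 - 7 / (4 * n)) < 0 ∧
    ∃ c ∈ Set.Ioo (3 * n / 4 + 21 / 64 - 7 / (4 * n)) (3 * n / 4 + 21 / 64),
      gE n c = 0 := by
  have hright := gE_right_endpoint_pos hn
  have hleft := gE_left_endpoint_neg hn
  have hle : 3 * n / 4 + 21 / 64 - 7 / (4 * n) ≤ 3 * n / 4 + 21 / 64 :=
    sub_le_self _ (by positivity)
  exact ⟨hright, hleft,
    intermediate_value_Ioo hle (continuous_gE n).continuousOn ⟨hleft, hright⟩⟩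
end

section
/- Let c ≥ 3 and n ≥ c, and let B be the c×c matrix with B_{jk} = (n−1)(j−k)² + c|j−k|. Among all nonnegative integer vectors m = (n_1,…,n_c) with each n_j ≥ 1 and Σ n_j = n, the quadratic form m^T B m is maximized only by vectors of the form m = 1 + ℓ·e_1 + (n−ℓ−c)·e_c with ℓ ∈ {⌊(n−c)/2⌋, ⌈(n−c)/2⌉}; moreover for m = 1 + ℓe_1 + (n−ℓ−c)e_c, m^T B m = (n+1)c²(c²−1)/6 + 2(n−c)(−nc² + (c(c+1)/6)((2n+1)c+n−1)) + 2ℓ(n−ℓ−c)((n−1)(c−1)² + c(c−1)). -/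
/-- The quadratic form `m ↦ mᵀ B m` where `B_{jk} = (n-1)(j-k)² + c|j-k|`
(indices `0,…,c-1`, which gives the same differences as `1,…,c`). -/
def quadFormB (n c : ℕ) (m : Fin c → ℕ) : ℚ :=
  ∑ j : Fin c, ∑ k : Fin c,
    (((n : ℚ) - 1) * (((j : ℕ) : ℚ) - ((k : ℕ) : ℚ)) ^ 2
        + (c : ℚ) * |((j : ℕ) : ℚ) - ((k : ℕ) : ℚ)|) * (m j : ℚ) * (m k : ℚ)

/-- The vector `1 + ℓ·e₁ + (n-ℓ-c)·e_c`. -/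
def extremeVec (n c ℓ : ℕ) : Fin c → ℕ :=
  fun j => 1 + (if (j : ℕ) = 0 then ℓ else 0) + (if (j : ℕ) = c - 1 then n - ℓ - c else 0)

/-!
Write `B_{jk} = φ(j - k)` with `φ(t) = (n - 1)t² + c|t|` (`entryB n c`, and `B` is `matB n c`).
As `B` is symmetric with zero diagonal, moving one unit from coordinate `j` to coordinate `i` of
`m` changes `mᵀBm` by `2((Bw)_i - (Bw)_j)`, where `w = m - e_j ≥ 0`. Since `φ` is strictly
convex, so is `a ↦ (Bw)_a`, and an interior row `j` is beaten by the first or the last one.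
Hence a maximizer, which exists because there are finitely many admissible `m`, has all interior
entries equal to `1`, i.e. it is `1 + ℓe₁ + (n - ℓ - c)e_c`. The value of the form there is a
constant plus a positive multiple of `ℓ(n - c - ℓ)`, which is largest exactly for
`ℓ = ⌊(n - c)/2⌋` and `ℓ = ⌈(n - c)/2⌉`.
-/

open Finset Matrix

section

variable {ι R : Type*} [Fintype ι] [CommRing R]

theorem Matrix.IsSymm.vecMul_eq_mulVec {A : Matrix ι ι R} (hA : A.IsSymm) (v : ι → R) :
    v ᵥ* A = A *ᵥ v := by
  rw [← vecMul_transpose, hA.eq]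

theorem Matrix.IsSymm.add_single_dotProduct_mulVec [DecidableEq ι] {A : Matrix ι ι R}
    (hA : A.IsSymm) (v : ι → R) (i : ι) (t : R) :
    (v + Pi.single i t) ⬝ᵥ A *ᵥ (v + Pi.single i t)
      = v ⬝ᵥ A *ᵥ v + 2 * t * (A *ᵥ v) i + t ^ 2 * A i i := by
  rw [mulVec_add, add_dotProduct, dotProduct_add, dotProduct_add, single_dotProduct,
    single_dotProduct, dotProduct_mulVec v A (Pi.single i t), hA.vecMul_eq_mulVec,
    dotProduct_single]
  simp only [mulVec_single, Pi.smul_apply, col_apply, MulOpposite.smul_eq_mul_unop,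
    MulOpposite.unop_op]
  ring

theorem Finset.sum_add_single {M : Type*} [AddCommMonoid M] [DecidableEq ι] (v : ι → M)
    (r : ι) (a : M) : ∑ k, (v + Pi.single r a : ι → M) k = ∑ k, v k + a := by
  simp only [Pi.add_apply, sum_add_distrib, sum_pi_single', mem_univ, if_true]

end

theorem half_mul_sub_half_sub_mul_sub (N l : ℤ) :
    N / 2 * (N - N / 2) - l * (N - l) = (l - N / 2) * (l - (N + 1) / 2) := by
  have hN : N = N / 2 + (N + 1) / 2 := by omega
  linear_combination (N / 2 - l) * hN

theorem mul_sub_le_half_mul_sub_half (N l : ℤ) : l * (N - l) ≤ N / 2 * (N - N / 2) := by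
  rw [← sub_nonneg, half_mul_sub_half_sub_mul_sub]
  rcases le_or_gt l (N / 2) with h | h
  · exact mul_nonneg_of_nonpos_of_nonpos (by omega) (by omega)
  · exact mul_nonneg (by omega) (by omega)

theorem eq_half_of_half_mul_sub_half_le {N l : ℤ} (h : N / 2 * (N - N / 2) ≤ l * (N - l)) :
    l = N / 2 ∨ l = (N + 1) / 2 := by
  rw [← sub_nonpos, half_mul_sub_half_sub_mul_sub] at h
  by_contra! hl
  rcases lt_or_gt_of_ne hl.1 with hlt | hgt
  · exact h.not_gt (mul_pos_of_neg_of_neg (by omega) (by omega))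
  · exact h.not_gt (mul_pos (by omega) (by omega))

def entryB (n c : ℕ) (t : ℚ) : ℚ := ((n : ℚ) - 1) * t ^ 2 + c * |t|

def matB (n c : ℕ) : Matrix (Fin c) (Fin c) ℚ :=
  Matrix.of fun j k => entryB n c ((j : ℕ) - (k : ℕ) : ℚ)

def compositions (n c : ℕ) : Set (Fin c → ℕ) := {m | (∀ j, 1 ≤ m j) ∧ ∑ j, m j = n}

section

variable {n c : ℕ}

theorem entryB_neg (t : ℚ) : entryB n c (-t) = entryB n c t := by
  simp [entryB]

theorem entryB_sub_comm (s t : ℚ) : entryB n c (s - t) = entryB n c (t - s) := by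
  rw [← entryB_neg, neg_sub]

theorem matB_apply (j k : Fin c) : matB n c j k = entryB n c ((j : ℕ) - (k : ℕ) : ℚ) := rfl

theorem matB_isSymm : (matB n c).IsSymm :=
  Matrix.IsSymm.ext fun _ _ => entryB_sub_comm _ _

theorem matB_apply_self (j : Fin c) : matB n c j j = 0 := by
  simp [matB_apply, entryB]

theorem quadFormB_eq_dotProduct (m : Fin c → ℕ) :
    quadFormB n c m = (fun j => (m j : ℚ)) ⬝ᵥ matB n c *ᵥ fun j => (m j : ℚ) := by
  simp only [quadFormB, dotProduct, mulVec, matB_apply, entryB, mul_sum]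
  exact sum_congr rfl fun j _ => sum_congr rfl fun k _ => by ring

theorem quadFormB_add_single (w : Fin c → ℕ) (i : Fin c) :
    quadFormB n c (w + Pi.single i 1)
      = quadFormB n c w + 2 * (matB n c *ᵥ fun j => (w j : ℚ)) i := by
  have hcast : (fun j => ((w + Pi.single i 1 : Fin c → ℕ) j : ℚ))
      = (fun j => (w j : ℚ)) + Pi.single i 1 := by
    ext j
    rcases eq_or_ne j i with rfl | hj <;> simp [*]
  rw [quadFormB_eq_dotProduct, quadFormB_eq_dotProduct, hcast,
    matB_isSymm.add_single_dotProduct_mulVec, matB_apply_self]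
  ring

theorem sum_range_entryB_sub {N : ℕ} {x : ℚ} (hx : (N : ℚ) - 1 ≤ x) :
    ∑ k ∈ range N, entryB n c (x - k)
      = ((n : ℚ) - 1) * (N * x ^ 2 - N * (N - 1) * x + N * (N - 1) * (2 * N - 1) / 6)
        + c * (N * x - N * (N - 1) / 2) := by
  induction N with
  | zero => simp
  | succ N ih =>
    push_cast at hx
    rw [sum_range_succ, ih (by linarith), entryB, abs_of_nonneg (by linarith)]
    push_cast
    ring

theorem sum_sum_range_entryB_sub (N : ℕ) :
    ∑ j ∈ range N, ∑ k ∈ range N, entryB n c ((j : ℚ) - k)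
      = ((n : ℚ) - 1) * N ^ 2 * (N ^ 2 - 1) / 6 + c * N * (N ^ 2 - 1) / 3 := by
  induction N with
  | zero => simp
  | succ N ih =>
    simp only [sum_range_succ, sum_add_distrib, ih]
    simp_rw [entryB_sub_comm _ (N : ℚ)]
    rw [sum_range_entryB_sub (sub_le_self _ zero_le_one), sub_self]
    simp only [entryB, abs_zero]
    push_cast
    ring

theorem matB_mulVec_one_last (hc : 0 < c) :
    (matB n c *ᵥ 1) ⟨c - 1, by omega⟩
      = ((n : ℚ) - 1) * (c * (c - 1) * (2 * c - 1) / 6) + c * (c * (c - 1) / 2) := by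
  have hcast : ((c - 1 : ℕ) : ℚ) = c - 1 := by rw [Nat.cast_pred hc]
  simp only [mulVec, dotProduct, matB_apply, Pi.one_apply, mul_one]
  rw [Fin.sum_univ_eq_sum_range (fun k => entryB n c (((c - 1 : ℕ) : ℚ) - k)), hcast,
    sum_range_entryB_sub le_rfl]
  ring

theorem matB_mulVec_one_zero (hc : 0 < c) :
    (matB n c *ᵥ 1) ⟨0, hc⟩ = (matB n c *ᵥ 1) ⟨c - 1, by omega⟩ := by
  simp only [mulVec, dotProduct, matB_apply, Pi.one_apply, mul_one]
  rw [Fin.sum_univ_eq_sum_range (fun k => entryB n c (((0 : ℕ) : ℚ) - k)),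
    Fin.sum_univ_eq_sum_range (fun k => entryB n c (((c - 1 : ℕ) : ℚ) - k)),
    ← sum_range_reflect]
  refine sum_congr rfl fun k hk => ?_
  rw [Nat.cast_sub (by simp at hk; omega), entryB_sub_comm]
  congr 1
  push_cast
  ring

theorem one_dotProduct_matB_mulVec_one :
    (1 : Fin c → ℚ) ⬝ᵥ matB n c *ᵥ 1 = (n + 1) * c ^ 2 * (c ^ 2 - 1) / 6 := by
  simp only [mulVec, dotProduct, matB_apply, Pi.one_apply, mul_one, one_mul]
  rw [Fin.sum_univ_eq_sum_range (fun j => ∑ k : Fin c, entryB n c ((j : ℚ) - k))]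
  simp_rw [fun j : ℕ => Fin.sum_univ_eq_sum_range (fun k => entryB n c ((j : ℚ) - k)) c]
  rw [sum_sum_range_entryB_sub]
  ring

theorem cast_extremeVec {ℓ : ℕ} (hc : 0 < c) (hℓ : ℓ + c ≤ n) :
    (fun j => (extremeVec n c ℓ j : ℚ))
      = 1 + Pi.single ⟨0, hc⟩ (ℓ : ℚ) + Pi.single ⟨c - 1, by omega⟩ ((n : ℚ) - ℓ - c) := by
  ext j
  simp only [extremeVec, Pi.add_apply, Pi.one_apply, Pi.single_apply, Fin.ext_iff]
  split_ifs <;> push_cast [Nat.sub_sub, Nat.cast_sub hℓ] <;> ring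

theorem quadFormB_extremeVec {ℓ : ℕ} (hc : 0 < c) (hℓ : ℓ + c ≤ n) :
    quadFormB n c (extremeVec n c ℓ)
      = ((n : ℚ) + 1) * (c : ℚ) ^ 2 * ((c : ℚ) ^ 2 - 1) / 6
        + 2 * ((n : ℚ) - (c : ℚ)) * (-(n : ℚ) * (c : ℚ) ^ 2
            + ((c : ℚ) * ((c : ℚ) + 1) / 6) * ((2 * (n : ℚ) + 1) * (c : ℚ) + (n : ℚ) - 1))
        + 2 * (ℓ : ℚ) * ((n : ℚ) - (ℓ : ℚ) - (c : ℚ))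
            * (((n : ℚ) - 1) * ((c : ℚ) - 1) ^ 2 + (c : ℚ) * ((c : ℚ) - 1)) := by
  have hcorner : matB n c ⟨c - 1, by omega⟩ ⟨0, hc⟩
      = ((n : ℚ) - 1) * ((c : ℚ) - 1) ^ 2 + (c : ℚ) * ((c : ℚ) - 1) := by
    have : (1 : ℚ) ≤ c := by exact_mod_cast hc
    rw [matB_apply, entryB, Nat.cast_pred hc, Nat.cast_zero, sub_zero,
      abs_of_nonneg (by linarith)]
  rw [quadFormB_eq_dotProduct, cast_extremeVec hc hℓ, matB_isSymm.add_single_dotProduct_mulVec,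
    matB_isSymm.add_single_dotProduct_mulVec, mulVec_add, Pi.add_apply, mulVec_single,
    Pi.smul_apply, col_apply, MulOpposite.smul_eq_mul_unop, MulOpposite.unop_op,
    matB_apply_self, matB_apply_self, one_dotProduct_matB_mulVec_one, hcorner,
    matB_mulVec_one_zero hc, matB_mulVec_one_last hc]
  ring

theorem quadFormB_extremeVec_le_iff {a b : ℕ} (hc : 2 ≤ c) (ha : a + c ≤ n)
    (hb : b + c ≤ n) :
    quadFormB n c (extremeVec n c a) ≤ quadFormB n c (extremeVec n c b) ↔
      (a : ℤ) * ((n - c : ℤ) - a) ≤ b * ((n - c : ℤ) - b) := by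
  have hK : 0 < ((n : ℚ) - 1) * ((c : ℚ) - 1) ^ 2 + c * (c - 1) := by
    have hc' : (2 : ℚ) ≤ c := by exact_mod_cast hc
    have hn' : (2 : ℚ) ≤ n := by exact_mod_cast (by omega : 2 ≤ n)
    have := mul_nonneg (by linarith : (0 : ℚ) ≤ n - 1) (sq_nonneg ((c : ℚ) - 1))
    have := mul_pos (by linarith : (0 : ℚ) < c) (by linarith : (0 : ℚ) < c - 1)
    linarith
  rw [quadFormB_extremeVec (by omega) ha, quadFormB_extremeVec (by omega) hb,
    add_le_add_iff_left, mul_le_mul_iff_of_pos_right hK, ← Int.cast_le (R := ℚ)]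
  push_cast
  constructor <;> intro h <;> linarith

theorem entryB_convex {s x t : ℚ} (hsx : s ≤ x) (hxt : x ≤ t) (y : ℚ) :
    (t - s) * entryB n c (x - y) + ((n : ℚ) - 1) * ((x - s) * (t - x) * (t - s))
      ≤ (t - x) * entryB n c (s - y) + (x - s) * entryB n c (t - y) := by
  have habs : (t - s) * |x - y| ≤ (t - x) * |s - y| + (x - s) * |t - y| := by
    calc (t - s) * |x - y| = |(t - x) * (s - y) + (x - s) * (t - y)| := by
          rw [← abs_of_nonneg (sub_nonneg.2 (hsx.trans hxt)), ← abs_mul]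
          ring_nf
      _ ≤ (t - x) * |s - y| + (x - s) * |t - y| := by
          grw [abs_add_le, abs_mul, abs_mul, abs_of_nonneg (sub_nonneg.2 hxt),
            abs_of_nonneg (sub_nonneg.2 hsx)]
  have hc : (0 : ℚ) ≤ c := Nat.cast_nonneg c
  simp only [entryB]
  nlinarith [mul_le_mul_of_nonneg_left habs hc]

theorem matB_mulVec_apply (w : Fin c → ℚ) (j : Fin c) :
    (matB n c *ᵥ w) j = ∑ k : Fin c, entryB n c ((j : ℕ) - (k : ℕ) : ℚ) * w k := rfl

theorem matB_mulVec_lt_max (hn : 2 ≤ n) {w : Fin c → ℚ} (hw : 0 ≤ w) (hw₁ : 0 < ∑ k, w k)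
    {i j l : Fin c} (hij : i < j) (hjl : j < l) :
    (matB n c *ᵥ w) j < max ((matB n c *ᵥ w) i) ((matB n c *ᵥ w) l) := by
  obtain ⟨s, hs⟩ : ∃ s : ℚ, s = (i : ℕ) := ⟨_, rfl⟩
  obtain ⟨x, hx⟩ : ∃ x : ℚ, x = (j : ℕ) := ⟨_, rfl⟩
  obtain ⟨t, ht⟩ : ∃ t : ℚ, t = (l : ℕ) := ⟨_, rfl⟩
  have hsx : s < x := by rw [hs, hx]; exact_mod_cast hij
  have hxt : x < t := by rw [hx, ht]; exact_mod_cast hjl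
  have hconv : (t - s) * (matB n c *ᵥ w) j + ((n : ℚ) - 1) * ((x - s) * (t - x) * (t - s))
      * ∑ k, w k ≤ (t - x) * (matB n c *ᵥ w) i + (x - s) * (matB n c *ᵥ w) l := by
    simp only [matB_mulVec_apply, mul_sum, ← sum_add_distrib, ← hs, ← hx, ← ht]
    refine sum_le_sum fun k _ => ?_
    nlinarith [mul_le_mul_of_nonneg_right (entryB_convex (n := n) (c := c) hsx.le hxt.le (k : ℕ))
      (hw k)]
  have hpos : 0 < ((n : ℚ) - 1) * ((x - s) * (t - x) * (t - s)) * ∑ k, w k := by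
    have hn' : (0 : ℚ) < n - 1 := by
      have : (2 : ℚ) ≤ n := by exact_mod_cast hn
      linarith
    have := sub_pos.2 hsx
    have := sub_pos.2 hxt
    have := sub_pos.2 (hsx.trans hxt)
    positivity
  nlinarith [le_max_left ((matB n c *ᵥ w) i) ((matB n c *ᵥ w) l),
    le_max_right ((matB n c *ᵥ w) i) ((matB n c *ᵥ w) l)]

theorem compositions_finite : (compositions n c).Finite :=
  (Set.Finite.pi fun _ => Set.finite_Iic n).subset fun m hm j _ =>
    hm.2 ▸ single_le_sum (fun k _ => Nat.zero_le (m k)) (mem_univ j)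

theorem extremeVec_mem_compositions {ℓ : ℕ} (hc : 0 < c) (hℓ : ℓ + c ≤ n) :
    extremeVec n c ℓ ∈ compositions n c := by
  refine ⟨fun j => by simp only [extremeVec]; omega, ?_⟩
  simp only [extremeVec, sum_add_distrib, sum_const, card_univ, Fintype.card_fin, smul_eq_mul,
    mul_one]
  rw [Fin.sum_univ_eq_sum_range (fun j => if j = 0 then ℓ else 0),
    Fin.sum_univ_eq_sum_range (fun j => if j = c - 1 then n - ℓ - c else 0), sum_ite_eq',
    sum_ite_eq']
  simp only [mem_range, hc, if_true, show c - 1 < c by omega]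
  omega

theorem exists_quadFormB_gt (hn : 2 ≤ n) {m : Fin c → ℕ} (hm : m ∈ compositions n c)
    {i j l : Fin c} (hij : i < j) (hjl : j < l) (hmj : 2 ≤ m j) :
    ∃ m' ∈ compositions n c, quadFormB n c m < quadFormB n c m' := by
  set w := m - Pi.single j 1
  have hw : ∀ k, 1 ≤ w k ∧ m k = w k + (Pi.single j 1 : Fin c → ℕ) k := fun k => by
    have := hm.1 k
    rcases eq_or_ne k j with rfl | hk
    · simp only [w, Pi.sub_apply, Pi.single_eq_same]; omega
    · simp only [w, Pi.sub_apply, Pi.single_eq_of_ne hk]; omega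
  have hm_eq : m = w + Pi.single j 1 := funext fun k => (hw k).2
  have hw_sum : ∑ k, w k + 1 = n := by
    rw [← hm.2, hm_eq, Finset.sum_add_single]
  have hR := matB_mulVec_lt_max (n := n) hn (w := fun k => (w k : ℚ)) (fun k => by simp)
    (sum_pos (fun k _ => by exact_mod_cast (hw k).1) ⟨j, mem_univ j⟩) hij hjl
  have hmem : ∀ r, w + Pi.single r 1 ∈ compositions n c := fun r =>
    ⟨fun k => (hw k).1.trans (by simp), by rw [Finset.sum_add_single, hw_sum]⟩
  obtain ⟨r, hr⟩ : ∃ r, (matB n c *ᵥ fun k => (w k : ℚ)) j < (matB n c *ᵥ fun k => (w k : ℚ)) r :=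
    (lt_max_iff.1 hR).elim (⟨i, ·⟩) (⟨l, ·⟩)
  refine ⟨w + Pi.single r 1, hmem r, ?_⟩
  rw [hm_eq, quadFormB_add_single, quadFormB_add_single]
  linarith

theorem eq_extremeVec_of_interior_eq_one (hc : 0 < c) {m : Fin c → ℕ}
    (hm : m ∈ compositions n c) (hint : ∀ j : Fin c, 0 < (j : ℕ) → (j : ℕ) < c - 1 → m j = 1) :
    ∃ ℓ, ℓ + c ≤ n ∧ m = extremeVec n c ℓ := by
  set i : Fin c := ⟨0, hc⟩
  set l : Fin c := ⟨c - 1, by omega⟩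
  have hℓ : m i - 1 + c ≤ n := by
    have hrest := card_nsmul_le_sum (univ.erase i) (fun k => m k) 1 fun k _ => hm.1 k
    rw [card_erase_of_mem (mem_univ i), card_univ, Fintype.card_fin, smul_eq_mul, mul_one]
      at hrest
    have := add_sum_erase univ m (mem_univ i)
    have := hm.1 i
    have := hm.2
    omega
  have hE := extremeVec_mem_compositions hc hℓ
  have hoff : ∀ k ∈ univ.erase l, m k = extremeVec n c (m i - 1) k := fun k hk => by
    have hkl : (k : ℕ) ≠ c - 1 := fun h => (mem_erase.1 hk).1 (Fin.ext h)
    have := k.isLt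
    simp only [extremeVec, hkl, if_false]
    split_ifs with hk0
    · have := hm.1 i
      rw [show k = i from Fin.ext hk0]
      omega
    · rw [hint k (by omega) (by omega)]
  refine ⟨m i - 1, hℓ, funext fun k => ?_⟩
  by_cases hk : k = l
  · have h₁ := add_sum_erase univ m (mem_univ l)
    have h₂ : extremeVec n c (m i - 1) l + ∑ k ∈ univ.erase l, m k = n := by
      rw [sum_congr rfl hoff, add_sum_erase _ _ (mem_univ l), hE.2]
    have := hm.2
    rw [hk]
    omega
  · exact hoff k (mem_erase.2 ⟨hk, mem_univ k⟩)

theorem eq_extremeVec_of_forall_quadFormB_le (hc : 0 < c) (hn : 2 ≤ n) {m : Fin c → ℕ}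
    (hm : m ∈ compositions n c)
    (hmax : ∀ m' ∈ compositions n c, quadFormB n c m' ≤ quadFormB n c m) :
    ∃ ℓ, ℓ + c ≤ n ∧ m = extremeVec n c ℓ := by
  refine eq_extremeVec_of_interior_eq_one hc hm fun j hj₀ hjl => ?_
  by_contra hmj
  obtain ⟨m', hm', hlt⟩ := exists_quadFormB_gt hn hm (i := ⟨0, hc⟩) (l := ⟨c - 1, by omega⟩)
    (Fin.lt_def.2 hj₀) (Fin.lt_def.2 hjl) (by have := hm.1 j; omega)
  exact (hmax m' hm').not_gt hlt

end

theorem quadFormB_max_general (n c : ℕ) (hc : 3 ≤ c) (hcn : c ≤ n) :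
    (∀ ℓ : ℕ, ℓ ≤ n - c →
      quadFormB n c (extremeVec n c ℓ)
        = ((n : ℚ) + 1) * (c : ℚ) ^ 2 * ((c : ℚ) ^ 2 - 1) / 6
          + 2 * ((n : ℚ) - (c : ℚ)) * (-(n : ℚ) * (c : ℚ) ^ 2
              + ((c : ℚ) * ((c : ℚ) + 1) / 6) * ((2 * (n : ℚ) + 1) * (c : ℚ) + (n : ℚ) - 1))
          + 2 * (ℓ : ℚ) * ((n : ℚ) - (ℓ : ℚ) - (c : ℚ))
              * (((n : ℚ) - 1) * ((c : ℚ) - 1) ^ 2 + (c : ℚ) * ((c : ℚ) - 1))) ∧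
    (∀ m : Fin c → ℕ, (∀ j, 1 ≤ m j) → (∑ j, m j = n) →
      quadFormB n c m ≤ quadFormB n c (extremeVec n c ((n - c) / 2))) ∧
    (∀ m : Fin c → ℕ, (∀ j, 1 ≤ m j) → (∑ j, m j = n) →
      (∀ m' : Fin c → ℕ, (∀ j, 1 ≤ m' j) → (∑ j, m' j = n) →
        quadFormB n c m' ≤ quadFormB n c m) →
      (m = extremeVec n c ((n - c) / 2) ∨ m = extremeVec n c ((n - c + 1) / 2))) := by
  have hc₀ : 0 < c := by omega
  have hn : 2 ≤ n := by omega
  have hhalf : (n - c) / 2 + c ≤ n := by omega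
  have hhalf_cast : (((n - c) / 2 : ℕ) : ℤ) = ((n : ℤ) - c) / 2 := by omega
  have hE := extremeVec_mem_compositions hc₀ hhalf
  obtain ⟨_, hm₀, hmax₀⟩ :=
    Set.exists_max_image _ (quadFormB n c) compositions_finite ⟨_, hE⟩
  obtain ⟨ℓ₀, hℓ₀, rfl⟩ := eq_extremeVec_of_forall_quadFormB_le hc₀ hn hm₀ hmax₀
  refine ⟨fun ℓ hℓ => quadFormB_extremeVec hc₀ (by omega), fun m h₁ h₂ => ?_,
    fun m h₁ h₂ hmax => ?_⟩
  · refine (hmax₀ m ⟨h₁, h₂⟩).trans ((quadFormB_extremeVec_le_iff (by omega) hℓ₀ hhalf).2 ?_)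
    rw [hhalf_cast]
    exact mul_sub_le_half_mul_sub_half _ _
  · obtain ⟨ℓ, hℓ, rfl⟩ :=
      eq_extremeVec_of_forall_quadFormB_le hc₀ hn ⟨h₁, h₂⟩ fun m' hm' => hmax m' hm'.1 hm'.2
    have hle := (quadFormB_extremeVec_le_iff (by omega) hhalf hℓ).1 (hmax _ hE.1 hE.2)
    rw [hhalf_cast] at hle
    rcases eq_half_of_half_mul_sub_half_le hle with h | h
    · exact .inl (congrArg _ (by omega))
    · exact .inr (congrArg _ (by omega))

theorem quadFormB_max (n c : ℕ) (hc : 3 ≤ c) (hn : 4 ≤ n) (hcn : c ≤ n) :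
    (∀ ℓ : ℕ, ℓ ≤ n - c →
      quadFormB n c (extremeVec n c ℓ)
        = ((n : ℚ) + 1) * (c : ℚ) ^ 2 * ((c : ℚ) ^ 2 - 1) / 6
          + 2 * ((n : ℚ) - (c : ℚ)) * (-(n : ℚ) * (c : ℚ) ^ 2
              + ((c : ℚ) * ((c : ℚ) + 1) / 6) * ((2 * (n : ℚ) + 1) * (c : ℚ) + (n : ℚ) - 1))
          + 2 * (ℓ : ℚ) * ((n : ℚ) - (ℓ : ℚ) - (c : ℚ))
              * (((n : ℚ) - 1) * ((c : ℚ) - 1) ^ 2 + (c : ℚ) * ((c : ℚ) - 1))) ∧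
    (∀ m : Fin c → ℕ, (∀ j, 1 ≤ m j) → (∑ j, m j = n) →
      quadFormB n c m ≤ quadFormB n c (extremeVec n c ((n - c) / 2))) ∧
    (∀ m : Fin c → ℕ, (∀ j, 1 ≤ m j) → (∑ j, m j = n) →
      (∀ m' : Fin c → ℕ, (∀ j, 1 ≤ m' j) → (∑ j, m' j = n) →
        quadFormB n c m' ≤ quadFormB n c m) →
      (m = extremeVec n c ((n - c) / 2) ∨ m = extremeVec n c ((n - c + 1) / 2))) :=
  quadFormB_max_general n c hc hcn
end
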